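/- arXiv:0704.0923 — 2 statements merged into one kernel-verified Lean document; each statement's English description precedes it below -/
import Mathlib

section
/- The limit as h → 0 from the right of ∫_e^∞ ((1 - x^h)/(h·x^h)) · (1/(x·(log x)^3)) dx equals -∫_e^∞ dx/(x·(log x)^2) = -1; moreover, for each h > 0 the integrand is dominated in absolute value by the integrable function e·log x/(x·(log x)^3) = e/(x·(log x)^2) on [e, ∞). -/
open MeasureTheory Real Set Filter Topology

lemma aux_bound (h : ℝ) (hh : 0 < h) (x : ℝ) (hx : x ∈ Ici (Real.exp 1)) :
    |((1 - x ^ h) / (h * x ^ h)) * (1 / (x * (Real.log x) ^ 3))|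
      ≤ Real.exp 1 / (x * (Real.log x) ^ 2) := by
  have hx' : Real.exp 1 ≤ x := hx
  have hx0 : (0:ℝ) < x := lt_of_lt_of_le (Real.exp_pos 1) hx'
  have hx1 : (1:ℝ) ≤ x := le_trans (by nlinarith [Real.add_one_le_exp (1:ℝ)]) hx'
  have hL : 1 ≤ Real.log x := by
    calc (1:ℝ) = Real.log (Real.exp 1) := (Real.log_exp 1).symm
    _ ≤ Real.log x := Real.log_le_log (Real.exp_pos 1) hx'
  have hL0 : 0 < Real.log x := lt_of_lt_of_le one_pos hL
  have hxh1 : (1:ℝ) ≤ x ^ h := Real.one_le_rpow hx1 hh.le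
  have hxh0 : (0:ℝ) < x ^ h := lt_of_lt_of_le one_pos hxh1
  -- key inequality: x^h - 1 ≤ h * log x * x^h
  have hexp : x ^ h = Real.exp (h * Real.log x) := by
    rw [Real.rpow_def_of_pos hx0, mul_comm]
  have key : x ^ h - 1 ≤ h * Real.log x * x ^ h := by
    set t := h * Real.log x with ht
    have ht0 : 0 < t := mul_pos hh hL0
    have h1 : Real.exp t * Real.exp (-t) = 1 := by
      rw [← Real.exp_add]; simp
    have h2 : 1 - t ≤ Real.exp (-t) := by nlinarith [Real.add_one_le_exp (-t)]
    have h3 : Real.exp t - 1 ≤ t * Real.exp t := by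
      nlinarith [Real.exp_pos t]
    rw [hexp]; linarith [h3]
  have habs : |((1 - x ^ h) / (h * x ^ h)) * (1 / (x * (Real.log x) ^ 3))|
      = ((x ^ h - 1) / (h * x ^ h)) * (1 / (x * (Real.log x) ^ 3)) := by
    rw [abs_mul, abs_div, abs_of_nonpos (by linarith : 1 - x ^ h ≤ 0),
      abs_of_pos (mul_pos hh hxh0),
      abs_of_pos (by positivity : (0:ℝ) < 1 / (x * (Real.log x) ^ 3))]
    ring
  rw [habs]
  have hstep : (x ^ h - 1) / (h * x ^ h) ≤ Real.log x := by
    rw [div_le_iff₀ (mul_pos hh hxh0)]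
    nlinarith [key]
  calc ((x ^ h - 1) / (h * x ^ h)) * (1 / (x * (Real.log x) ^ 3))
      ≤ Real.log x * (1 / (x * (Real.log x) ^ 3)) := by
        apply mul_le_mul_of_nonneg_right hstep (by positivity)
    _ = 1 / (x * (Real.log x) ^ 2) := by
        field_simp
    _ ≤ Real.exp 1 / (x * (Real.log x) ^ 2) := by
        apply div_le_div_of_nonneg_right ?_ (by positivity)
        · nlinarith [Real.add_one_le_exp (1:ℝ)]

lemma aux_deriv (x : ℝ) (hx : x ∈ Ioi (Real.exp 1)) :
    HasDerivAt (fun y : ℝ => -(Real.log y)⁻¹) (1 / (x * (Real.log x) ^ 2)) x := by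
  have hx0 : (0:ℝ) < x := lt_trans (Real.exp_pos 1) hx
  have hL : 1 < Real.log x := by
    calc (1:ℝ) = Real.log (Real.exp 1) := (Real.log_exp 1).symm
    _ < Real.log x := Real.log_lt_log (Real.exp_pos 1) hx
  have hL0 : Real.log x ≠ 0 := by positivity
  have h1 : HasDerivAt Real.log x⁻¹ x := Real.hasDerivAt_log (ne_of_gt hx0)
  have h2 : HasDerivAt (fun y : ℝ => -(Real.log y)⁻¹) (-(-x⁻¹ / Real.log x ^ 2)) x :=
    (h1.inv hL0).neg
  convert h2 using 1
  field_simp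

lemma aux_integrable :
    IntegrableOn (fun x : ℝ => 1 / (x * (Real.log x) ^ 2)) (Ioi (Real.exp 1)) := by
  apply integrableOn_Ioi_deriv_of_nonneg
      (g := fun y : ℝ => -(Real.log y)⁻¹) (l := 0)
  · apply ContinuousWithinAt.neg
    apply ContinuousWithinAt.inv₀
    · exact (Real.continuousAt_log (by positivity)).continuousWithinAt
    · rw [Real.log_exp]; norm_num
  · exact aux_deriv
  · intro x hx
    have hx0 : (0:ℝ) < x := lt_trans (Real.exp_pos 1) hx
    have hL : 1 < Real.log x := by
      calc (1:ℝ) = Real.log (Real.exp 1) := (Real.log_exp 1).symm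
      _ < Real.log x := Real.log_lt_log (Real.exp_pos 1) hx
    positivity
  · have : Tendsto (fun y : ℝ => (Real.log y)⁻¹) atTop (𝓝 0) :=
      Real.tendsto_log_atTop.inv_tendsto_atTop
    simpa using this.neg

lemma aux_integral :
    (∫ x in Ioi (Real.exp 1), 1 / (x * (Real.log x) ^ 2)) = 1 := by
  have := integral_Ioi_of_hasDerivAt_of_tendsto
    (f := fun y : ℝ => -(Real.log y)⁻¹)
    (f' := fun x : ℝ => 1 / (x * (Real.log x) ^ 2)) (a := Real.exp 1) (m := 0)
    ?_ aux_deriv aux_integrable ?_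
  · rw [this]; simp
  · apply ContinuousWithinAt.neg
    apply ContinuousWithinAt.inv₀
    · exact (Real.continuousAt_log (by positivity)).continuousWithinAt
    · rw [Real.log_exp]; norm_num
  · have : Tendsto (fun y : ℝ => (Real.log y)⁻¹) atTop (𝓝 0) :=
      Real.tendsto_log_atTop.inv_tendsto_atTop
    simpa using this.neg

/-- As `h → 0⁺`, `∫_e^∞ ((1 - x^h)/(h x^h)) · (1/(x (log x)^3)) dx` tends to
`-∫_e^∞ dx/(x (log x)^2) = -1`; moreover for each `h > 0` the integrand is dominated
in absolute value by the integrable function `e/(x (log x)^2)` on `[e, ∞)`. -/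
theorem stmt6 :
    Filter.Tendsto
      (fun h : ℝ => ∫ x in Ici (Real.exp 1),
        ((1 - x ^ h) / (h * x ^ h)) * (1 / (x * (Real.log x) ^ 3)))
      (nhdsWithin 0 (Set.Ioi 0))
      (nhds (-(∫ x in Ici (Real.exp 1), 1 / (x * (Real.log x) ^ 2)))) ∧
    (∫ x in Ici (Real.exp 1), 1 / (x * (Real.log x) ^ 2)) = 1 ∧
    (∀ h : ℝ, 0 < h → ∀ x ∈ Ici (Real.exp 1),
      |((1 - x ^ h) / (h * x ^ h)) * (1 / (x * (Real.log x) ^ 3))|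
        ≤ Real.exp 1 / (x * (Real.log x) ^ 2)) ∧
    IntegrableOn (fun x : ℝ => Real.exp 1 / (x * (Real.log x) ^ 2))
      (Ici (Real.exp 1)) := by
  have hint : IntegrableOn (fun x : ℝ => 1 / (x * (Real.log x) ^ 2))
      (Ici (Real.exp 1)) := by
    rw [integrableOn_Ici_iff_integrableOn_Ioi]; exact aux_integrable
  have hval : (∫ x in Ici (Real.exp 1), 1 / (x * (Real.log x) ^ 2)) = 1 := by
    rw [MeasureTheory.integral_Ici_eq_integral_Ioi]; exact aux_integral
  have hbint : IntegrableOn (fun x : ℝ => Real.exp 1 / (x * (Real.log x) ^ 2))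
      (Ici (Real.exp 1)) := by
    simpa only [mul_one_div, IntegrableOn] using hint.const_mul (Real.exp 1)
  refine ⟨?_, hval, fun h hh x hx => aux_bound h hh x hx, hbint⟩
  -- the tendsto part
  have key : Filter.Tendsto
      (fun h : ℝ => ∫ x in Ici (Real.exp 1),
        ((1 - x ^ h) / (h * x ^ h)) * (1 / (x * (Real.log x) ^ 3)))
      (nhdsWithin 0 (Set.Ioi 0))
      (nhds (∫ x in Ici (Real.exp 1), -(1 / (x * (Real.log x) ^ 2)))) := by
    apply MeasureTheory.tendsto_integral_filter_of_dominated_convergence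
      (bound := fun x : ℝ => Real.exp 1 / (x * (Real.log x) ^ 2))
    · filter_upwards with h
      apply Measurable.aestronglyMeasurable
      measurability
    · filter_upwards [self_mem_nhdsWithin] with h (hh : 0 < h)
      rw [ae_restrict_iff' measurableSet_Ici]
      filter_upwards with x hx
      rw [Real.norm_eq_abs]
      exact aux_bound h hh x hx
    · exact hbint
    · rw [ae_restrict_iff' measurableSet_Ici]
      filter_upwards with x hx
      have hx0 : (0:ℝ) < x := lt_of_lt_of_le (Real.exp_pos 1) hx
      have hL : 1 ≤ Real.log x := by
        calc (1:ℝ) = Real.log (Real.exp 1) := (Real.log_exp 1).symm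
        _ ≤ Real.log x := Real.log_le_log (Real.exp_pos 1) hx
      have hL0 : Real.log x ≠ 0 := by positivity
      -- derivative of h ↦ x^h at 0 is log x
      have hd : HasDerivAt (fun h : ℝ => x ^ h) (Real.log x) 0 := by
        have h1 : HasDerivAt (fun h : ℝ => h * Real.log x) (Real.log x) 0 := by
          simpa using (hasDerivAt_id (0:ℝ)).mul_const (Real.log x)
        have h2 := h1.exp
        simp only [zero_mul, Real.exp_zero, one_mul] at h2
        apply h2.congr_of_eventuallyEq
        filter_upwards with y
        rw [Real.rpow_def_of_pos hx0, mul_comm]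
      have hslope : Tendsto (fun h : ℝ => (x ^ h - 1) / h)
          (nhdsWithin 0 (Set.Ioi 0)) (𝓝 (Real.log x)) := by
        have := (hasDerivAt_iff_tendsto_slope).1 hd
        have h2 : Tendsto (slope (fun h : ℝ => x ^ h) 0)
            (nhdsWithin 0 (Set.Ioi 0)) (𝓝 (Real.log x)) :=
          this.mono_left (nhdsWithin_mono _ (fun y hy => ne_of_gt hy))
        apply h2.congr'
        filter_upwards [self_mem_nhdsWithin] with h (hh : 0 < h)
        simp [slope_def_field, Real.rpow_zero, div_eq_inv_mul]
      have hcont : Tendsto (fun h : ℝ => x ^ h) (nhdsWithin 0 (Set.Ioi 0))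
          (𝓝 1) := by
        have := hd.continuousAt.tendsto
        rw [Real.rpow_zero] at this
        exact this.mono_left nhdsWithin_le_nhds
      have hmain : Tendsto (fun h : ℝ => (1 - x ^ h) / (h * x ^ h))
          (nhdsWithin 0 (Set.Ioi 0)) (𝓝 (-(Real.log x))) := by
        have := (hslope.neg.mul (hcont.inv₀ one_ne_zero))
        simp only [inv_one, mul_one] at this
        apply this.congr
        intro h
        field_simp
        ring
      have := hmain.mul_const (1 / (x * (Real.log x) ^ 3))
      convert this using 2
      field_simp
  rw [MeasureTheory.integral_neg] at key
  exact key
end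

section
/- The normalizing constant a_θ = (∫_e^∞ x^{-θ}(log x)^{-3} dx)^{-1} has a one-sided (right) derivative at θ = 1, and this derivative equals 4; in particular it lies in (0, ∞). -/
open MeasureTheory Real Set Filter


lemma log_gt {x : ℝ} (hx : Real.exp 1 < x) : 1 < Real.log x := by
  have h0 : (0:ℝ) < Real.exp 1 := Real.exp_pos 1
  have := Real.log_lt_log h0 hx
  rwa [Real.log_exp] at this

lemma xpos {x : ℝ} (hx : Real.exp 1 < x) : 0 < x := lt_trans (Real.exp_pos 1) hx

lemma hasDeriv3 {x : ℝ} (hx : Real.exp 1 < x) :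
    HasDerivAt (fun x : ℝ => -(1/2) * ((Real.log x) ^ 2)⁻¹) (x⁻¹ * ((Real.log x) ^ 3)⁻¹) x := by
  have hL := log_gt hx
  have hx0 : x ≠ 0 := ne_of_gt (xpos hx)
  have hLne : Real.log x ≠ 0 := by linarith
  have h := (((Real.hasDerivAt_log hx0).pow 2).inv (pow_ne_zero 2 hLne)).const_mul (-(1/2) : ℝ)
  refine h.congr_deriv ?_
  field_simp
  rw [Pi.pow_apply]
  ring

lemma hasDeriv2 {x : ℝ} (hx : Real.exp 1 < x) :
    HasDerivAt (fun x : ℝ => -((Real.log x))⁻¹) (x⁻¹ * ((Real.log x) ^ 2)⁻¹) x := by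
  have hL := log_gt hx
  have hx0 : x ≠ 0 := ne_of_gt (xpos hx)
  have hLne : Real.log x ≠ 0 := by linarith
  have h := ((Real.hasDerivAt_log hx0).inv hLne).neg
  refine h.congr_deriv ?_
  field_simp

lemma tends3 : Tendsto (fun x : ℝ => -(1/2) * ((Real.log x) ^ 2)⁻¹) atTop (nhds 0) := by
  have hpow : Tendsto (fun x : ℝ => (Real.log x) ^ 2) atTop atTop :=
    (tendsto_pow_atTop two_ne_zero).comp Real.tendsto_log_atTop
  have := (tendsto_inv_atTop_zero.comp hpow).const_mul (-(1/2) : ℝ)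
  simpa using this

lemma tends2 : Tendsto (fun x : ℝ => -((Real.log x))⁻¹) atTop (nhds 0) := by
  have := (tendsto_inv_atTop_zero.comp Real.tendsto_log_atTop).neg
  simpa [Function.comp] using this

lemma cwa3 : ContinuousWithinAt (fun x : ℝ => -(1/2) * ((Real.log x) ^ 2)⁻¹) (Ici (Real.exp 1)) (Real.exp 1) := by
  apply ContinuousAt.continuousWithinAt
  have h1 : ContinuousAt Real.log (Real.exp 1) := Real.continuousAt_log (ne_of_gt (Real.exp_pos 1))
  exact (ContinuousAt.inv₀ (h1.pow 2) (by simp [Real.log_exp])).const_mul _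

lemma cwa2 : ContinuousWithinAt (fun x : ℝ => -((Real.log x))⁻¹) (Ici (Real.exp 1)) (Real.exp 1) := by
  apply ContinuousAt.continuousWithinAt
  have h1 : ContinuousAt Real.log (Real.exp 1) := Real.continuousAt_log (ne_of_gt (Real.exp_pos 1))
  exact (ContinuousAt.inv₀ h1 (by simp [Real.log_exp])).neg

lemma nonneg3 : ∀ x ∈ Ioi (Real.exp 1), 0 ≤ x⁻¹ * ((Real.log x) ^ 3)⁻¹ := by
  intro x hx
  have := log_gt hx
  have := xpos hx
  positivity

lemma nonneg2 : ∀ x ∈ Ioi (Real.exp 1), 0 ≤ x⁻¹ * ((Real.log x) ^ 2)⁻¹ := by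
  intro x hx
  have := log_gt hx
  have := xpos hx
  positivity

lemma int3_val : ∫ x in Ioi (Real.exp 1), x⁻¹ * ((Real.log x) ^ 3)⁻¹ = 1/2 := by
  rw [integral_Ioi_of_hasDerivAt_of_nonneg cwa3 (fun x hx => hasDeriv3 hx) nonneg3 tends3]
  simp [Real.log_exp]

lemma int2_val : ∫ x in Ioi (Real.exp 1), x⁻¹ * ((Real.log x) ^ 2)⁻¹ = 1 := by
  rw [integral_Ioi_of_hasDerivAt_of_nonneg cwa2 (fun x hx => hasDeriv2 hx) nonneg2 tends2]
  simp [Real.log_exp]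

lemma int3_int : IntegrableOn (fun x : ℝ => x⁻¹ * ((Real.log x) ^ 3)⁻¹) (Ioi (Real.exp 1)) :=
  integrableOn_Ioi_deriv_of_nonneg cwa3 (fun x hx => hasDeriv3 hx) nonneg3 tends3

lemma int2_int : IntegrableOn (fun x : ℝ => x⁻¹ * ((Real.log x) ^ 2)⁻¹) (Ioi (Real.exp 1)) :=
  integrableOn_Ioi_deriv_of_nonneg cwa2 (fun x hx => hasDeriv2 hx) nonneg2 tends2

lemma meas_theta (θ : ℝ) :
    AEStronglyMeasurable (fun x : ℝ => x ^ (-θ) * ((Real.log x) ^ 3)⁻¹)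
      (volume.restrict (Ioi (Real.exp 1))) := by
  apply Measurable.aestronglyMeasurable
  exact (measurable_id.pow_const (-θ) |>.mul ((Real.measurable_log.pow_const 3).inv))

lemma integrable_theta {θ : ℝ} (hθ : 1 ≤ θ) :
    IntegrableOn (fun x : ℝ => x ^ (-θ) * ((Real.log x) ^ 3)⁻¹) (Ioi (Real.exp 1)) := by
  apply MeasureTheory.Integrable.mono int3_int (meas_theta θ)
  rw [ae_restrict_iff' measurableSet_Ioi]
  apply ae_of_all
  intro x hx
  have hx1 : (1:ℝ) < x := lt_trans (by nlinarith [Real.exp_pos 1, Real.add_one_le_exp 1]) hx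
  have hL := log_gt hx
  have hrp : x ^ (-θ) ≤ x⁻¹ := by
    rw [← Real.rpow_neg_one x]
    exact Real.rpow_le_rpow_of_exponent_le hx1.le (by linarith)
  have h1 : (0:ℝ) ≤ x ^ (-θ) := (Real.rpow_pos_of_pos (xpos hx) _).le
  have h2 : (0:ℝ) ≤ ((Real.log x) ^ 3)⁻¹ := by positivity
  rw [norm_eq_abs, norm_eq_abs, abs_of_nonneg (by positivity), abs_of_nonneg (by positivity)]
  exact mul_le_mul_of_nonneg_right hrp h2

lemma one_lt_of {x : ℝ} (hx : Real.exp 1 < x) : 1 < x :=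
  lt_trans (by nlinarith [Real.add_one_le_exp 1]) hx

lemma hasDerivTheta {x : ℝ} (hx : Real.exp 1 < x) :
    HasDerivAt (fun θ : ℝ => x ^ (-θ)) (-(x⁻¹ * Real.log x)) 1 := by
  have hx0 : (0:ℝ) < x := xpos hx
  have hfun : (fun θ : ℝ => x ^ (-θ)) = fun θ => Real.exp (Real.log x * -θ) :=
    funext fun θ => Real.rpow_def_of_pos hx0 _
  rw [hfun]
  have h := (HasDerivAt.const_mul (Real.log x) ((hasDerivAt_id (1:ℝ)).neg)).exp
  refine h.congr_deriv ?_
  simp only [id_eq, Pi.neg_apply, mul_neg_one, Real.exp_neg, Real.exp_log hx0]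
  ring

lemma bound_ineq {θ x : ℝ} (hθ : 1 < θ) (hx : Real.exp 1 < x) :
    ‖(θ - 1)⁻¹ * ((x ^ (-θ) - x ^ (-(1:ℝ))) * ((Real.log x) ^ 3)⁻¹)‖
      ≤ x⁻¹ * ((Real.log x) ^ 2)⁻¹ := by
  have hx0 : (0:ℝ) < x := xpos hx
  have hx1 : (1:ℝ) < x := one_lt_of hx
  have hL : 1 < Real.log x := log_gt hx
  have hLne : Real.log x ≠ 0 := by linarith
  have hθ1 : (0:ℝ) < θ - 1 := by linarith
  have hA_le : x ^ (-θ) ≤ x ^ (-(1:ℝ)) :=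
    Real.rpow_le_rpow_of_exponent_le hx1.le (by linarith)
  have key : x ^ (-(1:ℝ)) - x ^ (-θ) ≤ (θ - 1) * (x⁻¹ * Real.log x) := by
    have e2 : x ^ (-θ) = Real.exp (Real.log x * -θ) := Real.rpow_def_of_pos hx0 _
    have e3 : x ^ (-(1:ℝ)) = Real.exp (Real.log x * -1) := Real.rpow_def_of_pos hx0 _
    have hsplit : Real.exp (Real.log x * -θ)
        = Real.exp (Real.log x * -1) * Real.exp (-((θ - 1) * Real.log x)) := by
      rw [← Real.exp_add]; ring_nf
    have hexp : 1 - Real.exp (-((θ - 1) * Real.log x)) ≤ (θ - 1) * Real.log x := by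
      have := Real.add_one_le_exp (-((θ - 1) * Real.log x)); linarith
    have hexpL : Real.exp (Real.log x * -1) = x⁻¹ := by
      rw [mul_neg_one, Real.exp_neg, Real.exp_log hx0]
    have hcalc : x ^ (-(1:ℝ)) - x ^ (-θ)
        = x⁻¹ * (1 - Real.exp (-((θ - 1) * Real.log x))) := by
      rw [e2, e3, hsplit, hexpL]; ring
    rw [hcalc]
    calc x⁻¹ * (1 - Real.exp (-((θ - 1) * Real.log x)))
        ≤ x⁻¹ * ((θ - 1) * Real.log x) :=
          mul_le_mul_of_nonneg_left hexp (by positivity)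
      _ = (θ - 1) * (x⁻¹ * Real.log x) := by ring
  have habs : ‖(θ - 1)⁻¹ * ((x ^ (-θ) - x ^ (-(1:ℝ))) * ((Real.log x) ^ 3)⁻¹)‖
      = (θ - 1)⁻¹ * ((x ^ (-(1:ℝ)) - x ^ (-θ)) * ((Real.log x) ^ 3)⁻¹) := by
    rw [norm_eq_abs, abs_mul, abs_mul, abs_of_pos (inv_pos.2 hθ1), abs_sub_comm,
      abs_of_nonneg (sub_nonneg.2 hA_le), abs_of_nonneg (by positivity)]
  rw [habs]
  calc (θ - 1)⁻¹ * ((x ^ (-(1:ℝ)) - x ^ (-θ)) * ((Real.log x) ^ 3)⁻¹)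
      ≤ (θ - 1)⁻¹ * (((θ - 1) * (x⁻¹ * Real.log x)) * ((Real.log x) ^ 3)⁻¹) := by
        apply mul_le_mul_of_nonneg_left _ (by positivity)
        exact mul_le_mul_of_nonneg_right key (by positivity)
    _ = x⁻¹ * ((Real.log x) ^ 2)⁻¹ := by
        field_simp

lemma G1_val : (∫ x in Ici (Real.exp 1), x ^ (-(1:ℝ)) * ((Real.log x) ^ 3)⁻¹) = 1/2 := by
  rw [integral_Ici_eq_integral_Ioi, ← int3_val]
  simp only [Real.rpow_neg_one]

lemma hasDerivG :
    HasDerivWithinAt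
      (fun θ : ℝ => ∫ x in Ici (Real.exp 1), x ^ (-θ) * ((Real.log x) ^ 3)⁻¹)
      (-1) (Ici 1) 1 := by
  rw [hasDerivWithinAt_iff_tendsto_slope, Ici_sdiff_left]
  have hDCT : Filter.Tendsto
      (fun θ : ℝ => ∫ x in Ioi (Real.exp 1),
        (θ - 1)⁻¹ * ((x ^ (-θ) - x ^ (-(1:ℝ))) * ((Real.log x) ^ 3)⁻¹))
      (nhdsWithin 1 (Ioi 1))
      (nhds (∫ x in Ioi (Real.exp 1), -(x⁻¹ * ((Real.log x) ^ 2)⁻¹))) := by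
    apply tendsto_integral_filter_of_dominated_convergence
      (fun x => x⁻¹ * ((Real.log x) ^ 2)⁻¹)
    · apply Filter.Eventually.of_forall
      intro θ
      apply Measurable.aestronglyMeasurable
      exact ((((measurable_id.pow_const (-θ)).sub (measurable_id.pow_const (-(1:ℝ)))).mul
        ((Real.measurable_log.pow_const 3).inv)).const_mul _)
    · filter_upwards [self_mem_nhdsWithin] with θ hθ
      rw [ae_restrict_iff' measurableSet_Ioi]
      exact ae_of_all _ fun x hx => bound_ineq hθ hx
    · exact int2_int
    · rw [ae_restrict_iff' measurableSet_Ioi]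
      apply ae_of_all
      intro x hx
      have hL : 1 < Real.log x := log_gt hx
      have hLne : Real.log x ≠ 0 := by linarith
      have hs := hasDerivAt_iff_tendsto_slope.1 (hasDerivTheta hx)
      have hmono : nhdsWithin (1:ℝ) (Ioi 1) ≤ nhdsWithin 1 {(1:ℝ)}ᶜ :=
        nhdsWithin_mono _ fun y hy => ne_of_gt hy
      have ht := (hs.mono_left hmono).mul_const ((Real.log x) ^ 3)⁻¹
      have hval : -(x⁻¹ * Real.log x) * ((Real.log x) ^ 3)⁻¹
          = -(x⁻¹ * ((Real.log x) ^ 2)⁻¹) := by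
        rw [show (Real.log x) ^ 3 = (Real.log x) ^ 2 * Real.log x from by ring, mul_inv,
          neg_mul, neg_inj, mul_mul_mul_comm, mul_inv_cancel₀ hLne, mul_one]
      rw [hval] at ht
      exact ht.congr fun θ => by rw [slope_def_field]; ring
  have hlim : ∫ x in Ioi (Real.exp 1), -(x⁻¹ * ((Real.log x) ^ 2)⁻¹) = -1 := by
    rw [integral_neg, int2_val]
  rw [hlim] at hDCT
  apply hDCT.congr'
  filter_upwards [self_mem_nhdsWithin] with θ (hθ : θ ∈ Ioi 1)
  have hθ1 : θ - 1 ≠ 0 := by have := hθ.out; intro h; linarith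
  have hsub : ∫ x in Ioi (Real.exp 1),
      (x ^ (-θ) * ((Real.log x) ^ 3)⁻¹ - x ^ (-(1:ℝ)) * ((Real.log x) ^ 3)⁻¹)
      = (∫ x in Ioi (Real.exp 1), x ^ (-θ) * ((Real.log x) ^ 3)⁻¹)
        - ∫ x in Ioi (Real.exp 1), x ^ (-(1:ℝ)) * ((Real.log x) ^ 3)⁻¹ :=
    integral_sub (integrable_theta (le_of_lt hθ.out)) (integrable_theta le_rfl)
  calc ∫ x in Ioi (Real.exp 1),
        (θ - 1)⁻¹ * ((x ^ (-θ) - x ^ (-(1:ℝ))) * ((Real.log x) ^ 3)⁻¹)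
      = (θ - 1)⁻¹ * ∫ x in Ioi (Real.exp 1),
          (x ^ (-θ) * ((Real.log x) ^ 3)⁻¹ - x ^ (-(1:ℝ)) * ((Real.log x) ^ 3)⁻¹) := by
        rw [MeasureTheory.integral_const_mul]
        congr 1
        apply integral_congr_ae
        apply ae_of_all
        intro x
        ring
    _ = slope (fun θ : ℝ => ∫ x in Ici (Real.exp 1), x ^ (-θ) * ((Real.log x) ^ 3)⁻¹) 1 θ := by
        rw [slope_def_field, hsub, integral_Ici_eq_integral_Ioi, integral_Ici_eq_integral_Ioi]
        field_simp


/-- The normalizing constant `a_θ = (∫_e^∞ x^{-θ}(log x)^{-3} dx)⁻¹` has a one-sided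
(right) derivative at `θ = 1`, equal to `4`; in particular it lies in `(0, ∞)`. -/
theorem stmt8 :
    HasDerivWithinAt
      (fun θ : ℝ => (∫ x in Ici (Real.exp 1), x ^ (-θ) * ((Real.log x) ^ 3)⁻¹)⁻¹)
      4 (Ici 1) 1 ∧ (4 : ℝ) ∈ Set.Ioi (0 : ℝ) := by
  constructor
  · have hne : (∫ x in Ici (Real.exp 1), x ^ (-(1:ℝ)) * ((Real.log x) ^ 3)⁻¹) ≠ 0 := by
      rw [G1_val]; norm_num
    have h := hasDerivG.inv hne
    refine h.congr_deriv ?_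
    rw [G1_val]
    norm_num
  · simp
end
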